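/- arXiv:1507.03564 — 3 statements merged into one kernel-verified Lean document; each statement's English description precedes it below -/
import Mathlib

section
/- Let Γ be a connected multigraph with vertex set V and let S ⊊ V be nonempty such that the induced subgraph Γ[V∖S] is connected. Then for every connected component of Γ[S], with vertex set C, the induced subgraph Γ[V∖C] is connected; in particular C is an elementary subset of V. -/
namespace ThetaPaper

/-- The adjacency relation within a vertex set `S`: `a` and `b` lie in `S`
and are joined by an edge of the multigraph with edge-endpoint map `ends`. -/
def AdjOn {V E : Type} (ends : E → Sym2 V) (S : Set V) (a b : V) : Prop :=
  a ∈ S ∧ b ∈ S ∧ ∃ e, ends e = s(a, b)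

/-- The induced subgraph on `S` is (nonempty and) connected. -/
def ConnectedOn {V E : Type} (ends : E → Sym2 V) (S : Set V) : Prop :=
  S.Nonempty ∧ ∀ a ∈ S, ∀ b ∈ S, Relation.ReflTransGen (AdjOn ends S) a b

/-- The multigraph is connected. -/
def GraphConnected {V E : Type} (ends : E → Sym2 V) : Prop :=
  ConnectedOn ends Set.univ

/-- A nonempty proper subset `S` of the vertices is elementary if both the induced
subgraph on `S` and the induced subgraph on its complement are connected. -/
def Elementary {V E : Type} (ends : E → Sym2 V) (S : Set V) : Prop :=
  S.Nonempty ∧ Sᶜ.Nonempty ∧ ConnectedOn ends S ∧ ConnectedOn ends Sᶜ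

/-- `cut S` is the number of edges with one endpoint in `S` and the other outside. -/
noncomputable def cut {V E : Type} (ends : E → Sym2 V) (S : Set V) : ℕ :=
  Nat.card {e : E // ∃ a b, ends e = s(a, b) ∧ a ∈ S ∧ b ∉ S}

/-- `ℓ(S,d)(φ) = d − Σ_{v∈S} φ(v) + cut(S)/2`. -/
noncomputable def ell {V E : Type} (ends : E → Sym2 V) (S : Set V) (d : ℤ) (φ : V → ℝ) : ℝ :=
  (d : ℝ) - (∑ᶠ v ∈ S, φ v) + (cut ends S : ℝ) / 2

/-- `φ` is nondegenerate: it lies on no stability hyperplane. -/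
def Nondegenerate {V E : Type} (ends : E → Sym2 V) (φ : V → ℝ) : Prop :=
  ∀ S : Set V, Elementary ends S → ∀ d : ℤ, ell ends S d φ ≠ 0

/-- The multigraph has loop-free circuit rank 0: after deleting all loops it is a tree
(connected, with number of edges = number of vertices − 1). -/
def RankZero {V E : Type} [Fintype V] (ends : E → Sym2 V) : Prop :=
  GraphConnected (fun e : {e : E // ¬ (ends e).IsDiag} => ends e.1) ∧
  Nat.card {e : E // ¬ (ends e).IsDiag} + 1 = Fintype.card V

/-- A sheaf model of degree `g−1`: a multidegree `dd` on the vertices together with a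
set `N` of nodes (where the corresponding sheaf fails to be locally free), with
`Σ dd + #N = g − 1`. -/
def IsSheafModel {V E : Type} [Fintype V] (dd : V → ℤ) (N : Set E) (g : ℤ) : Prop :=
  (∑ v, dd v) + (Nat.card N : ℤ) = g - 1

/-- The degree of the sheaf model `(dd, N)` on the subcurve with vertex set `S`:
`Σ_{v∈S} dd v` plus the number of edges of `N` with both endpoints in `S`. -/
noncomputable def degS {V E : Type} (ends : E → Sym2 V) (dd : V → ℤ) (N : Set E)
    (S : Set V) : ℤ :=
  (∑ᶠ v ∈ S, dd v) + (Nat.card {e : E // e ∈ N ∧ ∀ v ∈ ends e, v ∈ S} : ℤ)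

/-- `φ`-semistability of a sheaf model. -/
def Semistable {V E : Type} (ends : E → Sym2 V) (dd : V → ℤ) (N : Set E)
    (φ : V → ℝ) : Prop :=
  ∀ S : Set V, S.Nonempty → S ≠ Set.univ →
    (∑ᶠ v ∈ S, φ v) - (cut ends S : ℝ) / 2 ≤ (degS ends dd N S : ℝ)

/-- `φ`-stability of a sheaf model. -/
def Stable {V E : Type} (ends : E → Sym2 V) (dd : V → ℤ) (N : Set E)
    (φ : V → ℝ) : Prop :=
  ∀ S : Set V, S.Nonempty → S ≠ Set.univ →
    (∑ᶠ v ∈ S, φ v) - (cut ends S : ℝ) / 2 < (degS ends dd N S : ℝ)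

/-- The set of nondegenerate elements of the affine space `V(Γ)` (with the real
number `gr` playing the role of `g`). -/
def OmegaSet {V E : Type} [Fintype V] (ends : E → Sym2 V) (gr : ℝ) : Set (V → ℝ) :=
  {φ | (∑ v, φ v) = gr - 1 ∧ Nondegenerate ends φ}

/-- `P` is a stability polytope of `V(Γ)`: a connected component of the complement in
`V(Γ)` of the union of all stability hyperplanes. -/
def IsStabPolytope {V E : Type} [Fintype V] (ends : E → Sym2 V) (gr : ℝ)
    (P : Set (V → ℝ)) : Prop :=
  ∃ φ0 ∈ OmegaSet ends gr, P = connectedComponentIn (OmegaSet ends gr) φ0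

/-- The connected component of `u` in the induced subgraph `Γ[S]` (for `u ∈ S`):
the set of vertices reachable from `u` by edges lying inside `S`. -/
def compIn {V E : Type} (ends : E → Sym2 V) (S : Set V) (u : V) : Set V :=
  {w | Relation.ReflTransGen (AdjOn ends S) u w}

variable {V E : Type} {ends : E → Sym2 V}

instance (S : Set V) : Std.Symm (AdjOn ends S) where
  symm _ _ := fun ⟨ha, hb, e, he⟩ => ⟨hb, ha, e, he.trans Sym2.eq_swap⟩

lemma AdjOn.mono {S T : Set V} (hST : S ⊆ T) {a b : V} (h : AdjOn ends S a b) :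
    AdjOn ends T a b :=
  ⟨hST h.1, hST h.2.1, h.2.2⟩

lemma connectedOn_singleton (v : V) : ConnectedOn ends {v} :=
  ⟨Set.singleton_nonempty v, by rintro a rfl b rfl; rfl⟩

lemma ConnectedOn.of_subset_of_forall_reaches {S T : Set V} (hS : ConnectedOn ends S)
    (hST : S ⊆ T)
    (hreach : ∀ x ∈ T, ∃ z ∈ S, Relation.ReflTransGen (AdjOn ends T) x z) :
    ConnectedOn ends T := by
  refine ⟨hS.1.mono hST, fun a ha b hb => ?_⟩
  obtain ⟨za, hza, hpa⟩ := hreach a ha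
  obtain ⟨zb, hzb, hpb⟩ := hreach b hb
  have hmid : Relation.ReflTransGen (AdjOn ends T) za zb :=
    Relation.ReflTransGen.mono (fun _ _ => AdjOn.mono hST) _ _ (hS.2 za hza zb hzb)
  exact hpa.trans (hmid.trans (symm hpb))

lemma compIn_subset {S : Set V} {u : V} (hu : u ∈ S) : compIn ends S u ⊆ S := by
  intro w hw
  induction hw with
  | refl => exact hu
  | tail _ hadj _ => exact hadj.2.1

lemma reflTransGen_adjOn_compIn {S : Set V} {u w : V} (hw : w ∈ compIn ends S u) :
    Relation.ReflTransGen (AdjOn ends (compIn ends S u)) u w := by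
  induction hw with
  | refl => rfl
  | @tail v w huv hvw ih => exact ih.tail ⟨huv, huv.tail hvw, hvw.2.2⟩

lemma connectedOn_compIn (S : Set V) (u : V) : ConnectedOn ends (compIn ends S u) :=
  (connectedOn_singleton u).of_subset_of_forall_reaches
    (Set.singleton_subset_iff.2 Relation.ReflTransGen.refl)
    fun _ hx => ⟨u, rfl, symm (reflTransGen_adjOn_compIn hx)⟩

/-- Follow a path towards a vertex of `Sᶜ`: while it stays in `S` it cannot step into
the component, which is closed under edges inside `S`. -/
lemma exists_reflTransGen_compl_compIn (hconn : GraphConnected ends) {S : Set V} {t : V}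
    (ht : t ∉ S) {u : V} (hu : u ∈ S) {x : V} (hx : x ∉ compIn ends S u) :
    ∃ z ∉ S, Relation.ReflTransGen (AdjOn ends (compIn ends S u)ᶜ) x z := by
  induction hconn.2 x trivial t trivial using Relation.ReflTransGen.head_induction_on with
  | refl => exact ⟨t, ht, .refl⟩
  | @head x y hxy _ ih =>
    by_cases hxS : x ∈ S
    · have hy : y ∉ compIn ends S u := fun hy =>
        hx (hy.tail ⟨compIn_subset hu hy, hxS, (symm hxy : AdjOn ends _ y x).2.2⟩)
      obtain ⟨z, hz, hyz⟩ := ih hy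
      exact ⟨z, hz, hyz.head ⟨hx, hy, hxy.2.2⟩⟩
    · exact ⟨x, hxS, .refl⟩

theorem statement2_general (V E : Type) (ends : E → Sym2 V)
    (hconn : GraphConnected ends)
    (S : Set V) (hScompl : ConnectedOn ends Sᶜ)
    (u : V) (hu : u ∈ S) :
    ConnectedOn ends (compIn ends S u)ᶜ ∧ Elementary ends (compIn ends S u) := by
  set C := compIn ends S u
  have hSC : Sᶜ ⊆ Cᶜ := Set.compl_subset_compl.2 (compIn_subset hu)
  have hC : ConnectedOn ends C := connectedOn_compIn S u
  obtain ⟨t, ht⟩ := hScompl.1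
  have hCc : ConnectedOn ends Cᶜ := hScompl.of_subset_of_forall_reaches hSC
    fun _ hx => exists_reflTransGen_compl_compIn hconn ht hu hx
  exact ⟨hCc, hC.1, hCc.1, hC, hCc⟩

/-- Let `Γ` be a connected multigraph and `S ⊊ V` nonempty with
`Γ[V∖S]` connected.  Then for every connected component of `Γ[S]` — i.e. the
component `compIn ends S u` of any `u ∈ S` — the induced subgraph on its complement
is connected; in particular the component is an elementary subset. -/
theorem statement2 (V E : Type) (ends : E → Sym2 V)
    (hconn : GraphConnected ends)
    (S : Set V) (hSne : S.Nonempty) (hSproper : S ≠ Set.univ)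
    (hScompl : ConnectedOn ends Sᶜ)
    (u : V) (hu : u ∈ S) :
    ConnectedOn ends (compIn ends S u)ᶜ ∧ Elementary ends (compIn ends S u) :=
  statement2_general V E ends hconn S hScompl u hu

end ThetaPaper
end

section
/- Let Γ be a connected multigraph with at least two vertices and g an integer. Then every stability polytope of V(Γ) is a convex and bounded subset of the affine space V(Γ). -/
/-!
The stability polytope through `φ0` is the chamber of points of `V(Γ)` lying on the same side
as `φ0` of every stability hyperplane. The chamber is cut out of `V(Γ)` by open half-spaces,
hence convex and so connected, while each `ℓ(S,d)` keeps a constant sign on the connected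
component; so the two sets agree.

For boundedness, deleting a vertex `v` splits `Γ` into components which are all elementary
(their complements are connected through `v`). Hence `φ v` is `g - 1` minus the sums of `φ`
over elementary sets, and each such sum is confined to an interval of length one on the chamber.
-/

namespace ThetaPaper

open Set Relation

section Graph

variable {V E : Type} {ends : E → Sym2 V}

instance AdjOn.instSymm (S : Set V) : Std.Symm (AdjOn ends S) :=
  ⟨fun _ _ ⟨ha, hb, e, he⟩ => ⟨hb, ha, e, he.trans Sym2.eq_swap⟩⟩

lemma mem_of_reflTransGen_adjOn {S : Set V} {a b : V} (h : ReflTransGen (AdjOn ends S) a b)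
    (ha : a ∈ S) : b ∈ S := by
  induction h with
  | refl => exact ha
  | tail _ hbc _ => exact hbc.2.1

variable (ends) in
def componentOff (v w : V) : Set V :=
  {x | ReflTransGen (AdjOn ends {v}ᶜ) w x}

lemma mem_componentOff_self (v w : V) : w ∈ componentOff ends v w := ReflTransGen.refl

lemma componentOff_subset {v w : V} (hw : w ≠ v) : componentOff ends v w ⊆ {v}ᶜ :=
  fun _ hx => mem_of_reflTransGen_adjOn hx hw

lemma componentOff_eq_iff {v w x : V} :
    componentOff ends v x = componentOff ends v w ↔ x ∈ componentOff ends v w := by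
  refine ⟨fun h => h ▸ mem_componentOff_self v x, fun hx => ?_⟩
  ext y
  exact ⟨fun hy => ReflTransGen.trans hx hy, fun hy => (Std.Symm.symm _ _ hx).trans hy⟩

lemma reflTransGen_adjOn_componentOff {v w x : V} (hx : x ∈ componentOff ends v w) :
    ReflTransGen (AdjOn ends (componentOff ends v w)) w x := by
  induction hx with
  | refl => exact ReflTransGen.refl
  | @tail y z hwy hyz ih => exact ih.tail ⟨hwy, hwy.tail hyz, hyz.2.2⟩

lemma connectedOn_componentOff (v w : V) : ConnectedOn ends (componentOff ends v w) :=
  ⟨⟨w, mem_componentOff_self v w⟩, fun _ ha _ hb =>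
    (Std.Symm.symm _ _ (reflTransGen_adjOn_componentOff ha)).trans
      (reflTransGen_adjOn_componentOff hb)⟩

/-- A path from `x ∉ C` to `v` cannot enter `C` before reaching `v`, since the vertex
preceding its first visit to `C` would be joined to `C` outside `v`, hence lie in `C`. -/
lemma connectedOn_compl_componentOff (hconn : GraphConnected ends) {v w : V} (hw : w ≠ v) :
    ConnectedOn ends (componentOff ends v w)ᶜ := by
  set C := componentOff ends v w
  have hvC : v ∉ C := fun h => componentOff_subset hw h rfl
  suffices ∀ x, ReflTransGen (AdjOn ends univ) x v → x ∉ C → ReflTransGen (AdjOn ends Cᶜ) x v by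
    refine ⟨⟨v, hvC⟩, fun a ha b hb => ?_⟩
    exact (this a (hconn.2 a trivial v trivial) ha).trans
      (Std.Symm.symm _ _ (this b (hconn.2 b trivial v trivial) hb))
  intro x hxv
  induction hxv using ReflTransGen.head_induction_on with
  | refl => exact fun _ => ReflTransGen.refl
  | @head x y hxy _ ih =>
    intro hxC
    by_cases hyC : y ∈ C
    · by_cases hx : x = v
      · exact hx ▸ ReflTransGen.refl
      · have hyv : y ∈ ({v}ᶜ : Set V) := componentOff_subset hw hyC
        exact absurd (ReflTransGen.tail hyC ⟨hyv, hx, (Std.Symm.symm _ _ hxy).2.2⟩) hxC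
    · exact ReflTransGen.head ⟨hxC, hyC, hxy.2.2⟩ (ih hyC)

lemma elementary_componentOff (hconn : GraphConnected ends) {v w : V} (hw : w ≠ v) :
    Elementary ends (componentOff ends v w) :=
  ⟨⟨w, mem_componentOff_self v w⟩, ⟨v, fun h => componentOff_subset hw h rfl⟩,
    connectedOn_componentOff v w, connectedOn_compl_componentOff hconn hw⟩

variable [Fintype V]

open scoped Classical in
lemma sum_erase_eq_sum_componentOff (ψ : V → ℝ) (v : V) :
    ∑ x ∈ Finset.univ.erase v, ψ x =
      ∑ C ∈ (Finset.univ.erase v).image (componentOff ends v), ∑ᶠ x ∈ C, ψ x := by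
  rw [← Finset.sum_fiberwise_of_maps_to (g := componentOff ends v)
    fun x hx => Finset.mem_image_of_mem _ hx]
  refine Finset.sum_congr rfl fun C hC => ?_
  obtain ⟨w, hw, rfl⟩ := Finset.mem_image.1 hC
  have hfiber : ↑({x ∈ Finset.univ.erase v | componentOff ends v x = componentOff ends v w}) =
      componentOff ends v w := by
    ext x
    simp only [Finset.coe_filter, Finset.mem_erase, Finset.mem_univ, and_true, mem_ofPred_eq,
      componentOff_eq_iff]
    exact ⟨And.right, fun hx => ⟨componentOff_subset (Finset.ne_of_mem_erase hw) hx, hx⟩⟩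
  rw [← finsum_mem_coe_finset, hfiber]

lemma abs_apply_le_card (hconn : GraphConnected ends) {ψ : V → ℝ} (hψ : ∑ x, ψ x = 0)
    (hS : ∀ S, Elementary ends S → |∑ᶠ x ∈ S, ψ x| ≤ 1) (v : V) :
    |ψ v| ≤ Fintype.card V := by
  classical
  have hv : ψ v = -∑ C ∈ (Finset.univ.erase v).image (componentOff ends v), ∑ᶠ x ∈ C, ψ x := by
    rw [← sum_erase_eq_sum_componentOff, eq_neg_iff_add_eq_zero,
      Finset.add_sum_erase _ _ (Finset.mem_univ v), hψ]
  calc |ψ v| ≤ ∑ C ∈ (Finset.univ.erase v).image (componentOff ends v), |∑ᶠ x ∈ C, ψ x| := by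
        rw [hv, abs_neg]; exact Finset.abs_sum_le_sum_abs _ _
    _ ≤ ∑ C ∈ (Finset.univ.erase v).image (componentOff ends v), 1 := by
        refine Finset.sum_le_sum fun C hC => ?_
        obtain ⟨w, hw, rfl⟩ := Finset.mem_image.1 hC
        exact hS _ (elementary_componentOff hconn (Finset.ne_of_mem_erase hw))
    _ ≤ Fintype.card V := by
        rw [Finset.sum_const, nsmul_one, Nat.cast_le]
        exact Finset.card_image_le.trans (Finset.card_le_univ _)

end Graph

lemma IsPreconnected.pos_of_pos {X : Type*} [TopologicalSpace X] {C : Set X}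
    (hC : IsPreconnected C) {f : X → ℝ} (hf : ContinuousOn f C) (hne : ∀ x ∈ C, f x ≠ 0)
    {x y : X} (hx : x ∈ C) (hy : y ∈ C) (hfx : 0 < f x) : 0 < f y := by
  by_contra! hfy
  obtain ⟨z, hz, hz0⟩ := hC.intermediate_value hy hx hf ⟨hfy, hfx.le⟩
  exact hne z hz hz0

lemma abs_sub_lt_one_of_forall_int_mul_pos {s t : ℝ} (h : ∀ d : ℤ, 0 < (d - s) * (d - t)) :
    |s - t| < 1 := by
  have hk := h ⌊s⌋
  have hk1 := h (⌊s⌋ + 1)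
  have hs := Int.floor_le s
  have hs1 := Int.lt_floor_add_one s
  push_cast at hk1
  have hlt : (⌊s⌋ : ℝ) < s := hs.lt_of_ne fun heq => by simp [heq] at hk
  have ht : (⌊s⌋ : ℝ) < t := by nlinarith
  have ht1 : t < ⌊s⌋ + 1 := by nlinarith
  rw [abs_lt]
  constructor <;> linarith

section Chamber

variable {V E : Type} [Fintype V] {ends : E → Sym2 V}

lemma continuous_ell (S : Set V) (d : ℤ) : Continuous (ell ends S d) := by
  unfold ell
  simp_rw [finsum_mem_eq_finite_toFinset_sum _ S.toFinite]
  fun_prop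

lemma ell_add_smul {a b : ℝ} (hab : a + b = 1) (S : Set V) (d : ℤ) (φ ψ : V → ℝ) :
    ell ends S d (a • φ + b • ψ) = a * ell ends S d φ + b * ell ends S d ψ := by
  simp only [ell, Pi.add_apply, Pi.smul_apply, smul_eq_mul,
    finsum_mem_add_distrib S.toFinite, mul_sub, mul_add, mul_finsum_mem]
  linear_combination (↑d + (cut ends S : ℝ) / 2) * hab.symm

variable (ends) in
/-- `0 < ℓ(S,d)(φ0) * ℓ(S,d)(φ)` says that `φ` lies on the same side as `φ0` of the
hyperplane `ℓ(S,d) = 0`. -/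
def chamber (gr : ℝ) (φ0 : V → ℝ) : Set (V → ℝ) :=
  {φ | ∑ v, φ v = gr - 1 ∧
    ∀ S, Elementary ends S → ∀ d : ℤ, 0 < ell ends S d φ0 * ell ends S d φ}

lemma convex_chamber (gr : ℝ) (φ0 : V → ℝ) : Convex ℝ (chamber ends gr φ0) := by
  intro φ hφ ψ hψ a b ha hb hab
  refine ⟨?_, fun S hS d => ?_⟩
  · simp only [Pi.add_apply, Pi.smul_apply, smul_eq_mul, Finset.sum_add_distrib,
      ← Finset.mul_sum, hφ.1, hψ.1]
    linear_combination (gr - 1) * hab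
  · rw [ell_add_smul hab, mul_add, mul_left_comm, mul_left_comm _ b]
    exact convex_Ioi (0 : ℝ) (hφ.2 S hS d) (hψ.2 S hS d) ha hb hab

lemma chamber_subset_omegaSet (gr : ℝ) (φ0 : V → ℝ) : chamber ends gr φ0 ⊆ OmegaSet ends gr :=
  fun _ hφ => ⟨hφ.1, fun S hS d h0 => by simpa [h0] using hφ.2 S hS d⟩

lemma mem_chamber_self {gr : ℝ} {φ0 : V → ℝ} (h : φ0 ∈ OmegaSet ends gr) :
    φ0 ∈ chamber ends gr φ0 :=
  ⟨h.1, fun S hS d => mul_self_pos.2 (h.2 S hS d)⟩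

lemma connectedComponentIn_omegaSet_eq_chamber {gr : ℝ} {φ0 : V → ℝ}
    (h : φ0 ∈ OmegaSet ends gr) :
    connectedComponentIn (OmegaSet ends gr) φ0 = chamber ends gr φ0 := by
  refine subset_antisymm (fun φ hφ => ?_) ((convex_chamber gr φ0).isPreconnected
    |>.subset_connectedComponentIn (mem_chamber_self h) (chamber_subset_omegaSet gr φ0))
  have hΩ := connectedComponentIn_subset _ _ hφ
  refine ⟨hΩ.1, fun S hS d => ?_⟩
  have hf : Continuous fun ψ => ell ends S d φ0 * ell ends S d ψ :=
    continuous_const.mul (continuous_ell S d)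
  exact IsPreconnected.pos_of_pos isPreconnected_connectedComponentIn hf.continuousOn
    (fun ψ hψ => mul_ne_zero (h.2 S hS d) ((connectedComponentIn_subset _ _ hψ).2 S hS d))
    (mem_connectedComponentIn h) hφ (mul_self_pos.2 (h.2 S hS d))

lemma chamber_subset_closedBall (hconn : GraphConnected ends) {gr : ℝ} {φ0 : V → ℝ}
    (h0 : ∑ v, φ0 v = gr - 1) :
    chamber ends gr φ0 ⊆ Metric.closedBall φ0 (Fintype.card V) := by
  intro φ hφ
  rw [Metric.mem_closedBall, dist_pi_le_iff (Nat.cast_nonneg _)]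
  intro v
  refine abs_apply_le_card hconn (ψ := φ - φ0) ?_ (fun S hS => ?_) v
  · simp [Finset.sum_sub_distrib, hφ.1, h0]
  · rw [Pi.sub_def, finsum_mem_sub_distrib _ _ S.toFinite, abs_sub_comm,
      ← sub_sub_sub_cancel_right _ _ ((cut ends S : ℝ) / 2)]
    exact (abs_sub_lt_one_of_forall_int_mul_pos fun d =>
      (hφ.2 S hS d).trans_eq (by unfold ell; ring)).le

lemma isBounded_chamber (hconn : GraphConnected ends) {gr : ℝ} {φ0 : V → ℝ}
    (h0 : ∑ v, φ0 v = gr - 1) : Bornology.IsBounded (chamber ends gr φ0) :=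
  Metric.isBounded_closedBall.subset (chamber_subset_closedBall hconn h0)

end Chamber

theorem statement8_general (V E : Type) [Fintype V] (ends : E → Sym2 V)
    (hconn : GraphConnected ends) (g : ℤ)
    (P : Set (V → ℝ)) (hP : IsStabPolytope ends ((g : ℝ)) P) :
    Convex ℝ P ∧ Bornology.IsBounded P := by
  obtain ⟨φ0, hφ0, rfl⟩ := hP
  rw [connectedComponentIn_omegaSet_eq_chamber hφ0]
  exact ⟨convex_chamber _ φ0, isBounded_chamber hconn hφ0.1⟩

/-- For a connected multigraph with at least two vertices, every
stability polytope of `V(Γ)` is convex and bounded. -/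
theorem statement8 (V E : Type) [Fintype V] (ends : E → Sym2 V)
    (hconn : GraphConnected ends) (hcard : 2 ≤ Fintype.card V) (g : ℤ)
    (P : Set (V → ℝ)) (hP : IsStabPolytope ends ((g : ℝ)) P) :
    Convex ℝ P ∧ Bornology.IsBounded P :=
  statement8_general V E ends hconn g P hP

end ThetaPaper
end

section
/- Every stability hyperplane of V_{g,n} is of the form H(i,S,d) := {φ ∈ V_{g,n} : d − φ(Γ(i,S))(v1) + 1/2 = 0} for some admissible pair (i,S) and some integer d. -/
namespace ThetaPaper

/-- An `n`-marked graph (of would-be genus `g`): a multigraph with vertex set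
`Fin nv`, edge set `Fin ne`, a genus function and a marking function. -/
structure MarkedGraph (g n : ℕ) where
  nv : ℕ
  ne : ℕ
  ends : Fin ne → Sym2 (Fin nv)
  genus : Fin nv → ℕ
  mark : Fin n → Fin nv

/-- The valence of a vertex: the number of edge-ends at `v` (loops counted twice). -/
noncomputable def val {V E : Type} (ends : E → Sym2 V) (v : V) : ℕ :=
  Nat.card {e : E // ends e = s(v, v)} + Nat.card {e : E // v ∈ ends e}

/-- The graph is a stable `n`-marked graph of genus `g`. -/
def IsStable {g n : ℕ} (Γ : MarkedGraph g n) : Prop :=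
  GraphConnected Γ.ends ∧
  (∑ v, Γ.genus v) + Γ.ne + 1 = g + Γ.nv ∧
  ∀ v, Γ.genus v = 0 → 3 ≤ val Γ.ends v + Nat.card {j : Fin n // Γ.mark j = v}

/-- Stable and of loop-free circuit rank 0. -/
def Good {g n : ℕ} (Γ : MarkedGraph g n) : Prop :=
  IsStable Γ ∧ RankZero Γ.ends

/-- The type of stable `n`-marked genus-`g` graphs of loop-free circuit rank 0. -/
def GoodGraph (g n : ℕ) := {Γ : MarkedGraph g n // Good Γ}

/-- `c` is (the vertex map of) a contraction from `Γ1` to `Γ2`: there is a set `F` of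
contracted edges, each lying inside a fiber of `c`, the fibers of `c` are connected by
the edges of `F`, the non-contracted edges correspond bijectively to the edges of `Γ2`
with matching endpoints, genera add up (plus the circuit rank of the contracted piece),
and markings are transported. -/
def IsContraction {g n : ℕ} (Γ1 Γ2 : MarkedGraph g n) (c : Fin Γ1.nv → Fin Γ2.nv) : Prop :=
  (∀ j, Γ2.mark j = c (Γ1.mark j)) ∧
  ∃ (F : Set (Fin Γ1.ne)) (eE : {e : Fin Γ1.ne // e ∉ F} ≃ Fin Γ2.ne),
    (∀ e : {e : Fin Γ1.ne // e ∉ F}, Γ2.ends (eE e) = Sym2.map c (Γ1.ends e.1)) ∧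
    (∀ e ∈ F, ∃ w, ∀ v ∈ Γ1.ends e, c v = w) ∧
    (∀ w, ConnectedOn (fun e : F => Γ1.ends e.1) {v | c v = w}) ∧
    (∀ w, Γ2.genus w + Nat.card {v // c v = w} =
      (∑ v ∈ Finset.univ.filter (fun v => c v = w), Γ1.genus v) +
      Nat.card {e : Fin Γ1.ne // e ∈ F ∧ ∀ v ∈ Γ1.ends e, c v = w} + 1)

/-- The stability space `V_{g,n}`: tuples `φ(Γ)`, indexed by the stable `n`-marked
genus-`g` graphs of loop-free circuit rank 0, each summing to `g−1` and compatible
with all contractions. -/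
def VgnSet (g n : ℕ) : Set (∀ Γ : GoodGraph g n, Fin Γ.1.nv → ℝ) :=
  {φ | (∀ Γ, ∑ v, φ Γ v = (g : ℝ) - 1) ∧
    ∀ (Γ1 Γ2 : GoodGraph g n) (c : Fin Γ1.1.nv → Fin Γ2.1.nv),
      IsContraction Γ1.1 Γ2.1 c →
      ∀ w, φ Γ2 w = ∑ v ∈ Finset.univ.filter (fun v => c v = w), φ Γ1 v}

/-- An admissible pair `(i, S)`: `i ∈ {0,…,g}`, `S ⊆ {1,…,n}` contains the first
marking, `#S ≥ 2` if `i = 0` and `#S ≤ n−2` if `i = g`. -/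
structure AdmissiblePair (g n : ℕ) [NeZero n] where
  i : ℕ
  S : Finset (Fin n)
  hi : i ≤ g
  h1 : (0 : Fin n) ∈ S
  h0 : i = 0 → 2 ≤ S.card
  hg : i = g → S.card + 2 ≤ n

/-- The two-vertex one-edge stable marked graph `Γ(i,S)`: vertex `0` (= `v1`) of
genus `i` carrying the markings in `S`, vertex `1` (= `v2`) of genus `g−i` carrying
the remaining markings. -/
def GammaIS {g n : ℕ} [NeZero n] (p : AdmissiblePair g n) : MarkedGraph g n where
  nv := 2
  ne := 1
  ends := fun _ => s((0 : Fin 2), (1 : Fin 2))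
  genus := ![p.i, g - p.i]
  mark := fun j => if j ∈ p.S then 0 else 1

/-- The locus of nondegenerate elements of `V_{g,n}`. -/
def VgnOmega (g n : ℕ) : Set (∀ Γ : GoodGraph g n, Fin Γ.1.nv → ℝ) :=
  {φ | φ ∈ VgnSet g n ∧ ∀ Γ : GoodGraph g n, Nondegenerate Γ.1.ends (φ Γ)}

/-- `P` is a stability polytope of `V_{g,n}`: a connected component of the complement
in `V_{g,n}` of the union of all its stability hyperplanes. -/
def IsVgnPolytope (g n : ℕ) (P : Set (∀ Γ : GoodGraph g n, Fin Γ.1.nv → ℝ)) : Prop :=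
  ∃ φ0 ∈ VgnOmega g n, P = connectedComponentIn (VgnOmega g n) φ0

/-!
Since `Γ` becomes a tree once its loops are deleted and both sides of an elementary `S` are
connected, exactly one non-loop edge leaves `S`, so `ℓ(S,d)(φ(Γ)) = d − Σ_{v∈S} φ(Γ)(v) + 1/2`.
Contracting all other edges maps `Γ` onto `Γ(i,T)`, where `i` is the genus of `S` (vertex genera
plus loops) and `T` the set of markings on `S`; compatibility turns the sum into `φ(Γ(i,T))(v₁)`.
If `i = 0`, summing the stability inequality over the genus-0 tree `S` gives `#T ≥ #S + 1 ≥ 2`,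
and symmetrically on the complement when `i = g`, so `(i,T)` is admissible. When the first marking
lies outside `S`, pass to `Sᶜ`: `ℓ(Sᶜ, g−2−d) = −ℓ(S,d)` on `V_{g,n}`.
-/

section Multigraph

variable {V E : Type} (ends : E → Sym2 V)

def edgesIn (A : Set V) : Set E := {e | ∀ v ∈ ends e, v ∈ A}

def loopsIn (A : Set V) : Set E := {e | ∃ v ∈ A, ends e = s(v, v)}

-- Links are the edges that are not loops.
def linksIn (A : Set V) : Set E := {e | ¬ (ends e).IsDiag ∧ ∀ v ∈ ends e, v ∈ A}

def cutEdges (A : Set V) : Set E := {e | ∃ a b, ends e = s(a, b) ∧ a ∈ A ∧ b ∉ A}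

variable {ends}

lemma ite_eq_diag_add_ite_mem [DecidableEq V] (a b v : V) :
    ((if s(a, b) = s(v, v) then 1 else 0) + if v ∈ s(a, b) then 1 else 0 : ℕ) =
      (if a = v then 1 else 0) + if b = v then 1 else 0 := by
  by_cases a = v <;> by_cases b = v <;> simp_all [eq_comm]

lemma cut_eq_natCard_cutEdges (A : Set V) : cut ends A = Nat.card (cutEdges ends A) := rfl

lemma exists_ends_eq_mk (e : E) : ∃ a b, ends e = s(a, b) := Sym2.exists.1 ⟨_, rfl⟩

section Membership

variable {A : Set V} {e : E} {a b : V} (h : ends e = s(a, b))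
include h

lemma mem_edgesIn_iff_of_ends_eq : e ∈ edgesIn ends A ↔ a ∈ A ∧ b ∈ A := by
  simp [edgesIn, h]

lemma mem_loopsIn_iff_of_ends_eq : e ∈ loopsIn ends A ↔ a = b ∧ a ∈ A := by
  simp only [loopsIn, Set.mem_ofPred_eq, h, Sym2.eq_iff]
  grind

lemma mem_linksIn_iff_of_ends_eq : e ∈ linksIn ends A ↔ a ≠ b ∧ a ∈ A ∧ b ∈ A := by
  simp [linksIn, h]

lemma mem_cutEdges_iff_of_ends_eq :
    e ∈ cutEdges ends A ↔ a ∈ A ∧ b ∉ A ∨ b ∈ A ∧ a ∉ A := by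
  simp only [cutEdges, Set.mem_ofPred_eq, h, Sym2.eq_iff]
  grind

end Membership

lemma cutEdges_compl (A : Set V) : cutEdges ends Aᶜ = cutEdges ends A :=
  Set.ext fun _ =>
    ⟨fun ⟨a, b, h, ha, hb⟩ => ⟨b, a, h.trans Sym2.eq_swap, not_not.1 hb, ha⟩,
      fun ⟨a, b, h, ha, hb⟩ => ⟨b, a, h.trans Sym2.eq_swap, hb, not_not.2 ha⟩⟩

lemma cut_compl (A : Set V) : cut ends Aᶜ = cut ends A := by
  rw [cut_eq_natCard_cutEdges, cut_eq_natCard_cutEdges, cutEdges_compl]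

lemma notMem_cutEdges_of_mem_edgesIn {A : Set V} {e : E} (he : e ∈ edgesIn ends A) :
    e ∉ cutEdges ends A := fun ⟨_, b, h, _, hb⟩ => hb (he b (h ▸ Sym2.mem_mk_right _ _))

lemma ConnectedOn.restrict {A : Set V} {F : Set E} (h : ConnectedOn ends A)
    (hF : edgesIn ends A ⊆ F) : ConnectedOn (fun e : F => ends e) A := by
  refine ⟨h.1, fun a ha b hb => Relation.ReflTransGen.mono ?_ _ _ (h.2 a ha b hb)⟩
  rintro x y ⟨hx, hy, e, he⟩
  exact ⟨hx, hy, ⟨e, hF ((mem_edgesIn_iff_of_ends_eq he).2 ⟨hx, hy⟩)⟩, he⟩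

end Multigraph

section Counting

variable {V E : Type} {ends : E → Sym2 V} [Fintype E]

open Classical in
lemma natCard_eq_sum_ite (s : Set E) : Nat.card s = ∑ e, if e ∈ s then 1 else 0 := by
  rw [Nat.card_eq_fintype_card, Fintype.card_subtype, Finset.card_filter]

lemma card_edgesIn (A : Set V) :
    Nat.card (edgesIn ends A) = Nat.card (linksIn ends A) + Nat.card (loopsIn ends A) := by
  classical
  simp only [natCard_eq_sum_ite, ← Finset.sum_add_distrib]
  refine Finset.sum_congr rfl fun e _ => ?_
  obtain ⟨a, b, h⟩ := exists_ends_eq_mk (ends := ends) e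
  simp only [mem_edgesIn_iff_of_ends_eq h, mem_linksIn_iff_of_ends_eq h,
    mem_loopsIn_iff_of_ends_eq h]
  by_cases a = b <;> by_cases a ∈ A <;> by_cases b ∈ A <;> simp_all

lemma card_linksIn_univ (A : Set V) :
    Nat.card (linksIn ends Set.univ) =
      Nat.card (linksIn ends A) + Nat.card (linksIn ends Aᶜ) + cut ends A := by
  classical
  simp only [cut_eq_natCard_cutEdges, natCard_eq_sum_ite, ← Finset.sum_add_distrib]
  refine Finset.sum_congr rfl fun e _ => ?_
  obtain ⟨a, b, h⟩ := exists_ends_eq_mk (ends := ends) e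
  simp only [mem_linksIn_iff_of_ends_eq h, mem_cutEdges_iff_of_ends_eq h, Set.mem_compl_iff,
    Set.mem_univ]
  by_cases a = b <;> by_cases a ∈ A <;> by_cases b ∈ A <;> simp_all

lemma card_loopsIn_univ (A : Set V) :
    Nat.card (loopsIn ends Set.univ) =
      Nat.card (loopsIn ends A) + Nat.card (loopsIn ends Aᶜ) := by
  classical
  simp only [natCard_eq_sum_ite, ← Finset.sum_add_distrib]
  refine Finset.sum_congr rfl fun e _ => ?_
  obtain ⟨a, b, h⟩ := exists_ends_eq_mk (ends := ends) e
  simp only [mem_loopsIn_iff_of_ends_eq h, Set.mem_compl_iff, Set.mem_univ]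
  by_cases a ∈ A <;> simp_all

open Classical in
lemma sum_val [Fintype V] (A : Set V) :
    ∑ v ∈ Finset.univ.filter (· ∈ A), val ends v =
      2 * Nat.card (edgesIn ends A) + cut ends A := by
  have hval : ∀ v, val ends v =
      ∑ e, ((if ends e = s(v, v) then 1 else 0) + if v ∈ ends e then 1 else 0) := by
    intro v
    rw [val, Finset.sum_add_distrib, Nat.card_eq_fintype_card, Nat.card_eq_fintype_card,
      Fintype.card_subtype, Fintype.card_subtype, Finset.card_filter, Finset.card_filter]
  simp only [hval, cut_eq_natCard_cutEdges, natCard_eq_sum_ite, Finset.mul_sum,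
    ← Finset.sum_add_distrib]
  rw [Finset.sum_comm]
  refine Finset.sum_congr rfl fun e _ => ?_
  obtain ⟨a, b, h⟩ := exists_ends_eq_mk (ends := ends) e
  simp only [h, ite_eq_diag_add_ite_mem, Finset.sum_add_distrib, Finset.sum_ite_eq,
    mem_edgesIn_iff_of_ends_eq h, mem_cutEdges_iff_of_ends_eq h, Finset.mem_filter,
    Finset.mem_univ, true_and]
  by_cases a ∈ A <;> by_cases b ∈ A <;> simp_all

end Counting

section Connectivity

variable {V E : Type} {ends : E → Sym2 V}

variable (ends) in
def linkGraph (A : Set V) : SimpleGraph A :=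
  SimpleGraph.fromRel fun x y => ∃ e, ends e = s(x.1, y.1)

lemma ConnectedOn.linkGraph_connected {A : Set V} (h : ConnectedOn ends A) :
    (linkGraph ends A).Connected := by
  obtain ⟨⟨r, hr⟩, hconn⟩ := h
  have : Nonempty A := ⟨⟨r, hr⟩⟩
  refine ⟨fun ⟨a, ha⟩ ⟨b, hb⟩ => ?_⟩
  induction hconn a ha b hb with
  | refl => rfl
  | @tail c d _ hcd ih =>
    obtain ⟨hc, hd, e, he⟩ := hcd
    refine (ih hc).trans ?_
    by_cases hcd : c = d
    · subst hcd; rfl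
    · exact SimpleGraph.Adj.reachable <| (SimpleGraph.fromRel_adj _ _ _).2
        ⟨fun h => hcd (congrArg Subtype.val h), .inl ⟨e, he⟩⟩

lemma natCard_edgeSet_linkGraph_le [Finite E] (A : Set V) :
    Nat.card (linkGraph ends A).edgeSet ≤ Nat.card (linksIn ends A) := by
  have hlift : ∀ z : (linkGraph ends A).edgeSet,
      ∃ e : linksIn ends A, ends e = z.1.map Subtype.val := by
    rintro ⟨z, hz⟩
    induction z using Sym2.ind with
    | _ x y =>
      obtain ⟨hxy, hrel⟩ :=
        (SimpleGraph.fromRel_adj _ _ _).1 ((SimpleGraph.mem_edgeSet _).1 hz)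
      obtain ⟨e, he⟩ : ∃ e, ends e = s(x.1, y.1) :=
        hrel.elim id fun ⟨e, he⟩ => ⟨e, he.trans Sym2.eq_swap⟩
      refine ⟨⟨e, (mem_linksIn_iff_of_ends_eq he).2 ⟨?_, x.2, y.2⟩⟩, he⟩
      exact fun h => hxy (Subtype.ext h)
  choose f hf using hlift
  refine Nat.card_le_card_of_injective f fun z w hzw => Subtype.ext ?_
  exact Sym2.map.injective Subtype.val_injective (by rw [← hf, ← hf, hzw])

lemma ConnectedOn.card_le_card_linksIn_add_one [Finite V] [Finite E] {A : Set V}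
    (h : ConnectedOn ends A) : Nat.card A ≤ Nat.card (linksIn ends A) + 1 :=
  h.linkGraph_connected.card_vert_le_card_edgeSet_add_one.trans <|
    Nat.add_le_add_right (natCard_edgeSet_linkGraph_le A) 1

end Connectivity

section Elementary

variable {V E : Type} {ends : E → Sym2 V}

lemma Elementary.compl {A : Set V} (h : Elementary ends A) : Elementary ends Aᶜ := by
  obtain ⟨hne, hcne, hconn, hcconn⟩ := h
  exact ⟨hcne, by rwa [compl_compl], hcconn, by rwa [compl_compl]⟩

lemma exists_rel_mem_notMem_of_reflTransGen {r : V → V → Prop} {A : Set V} {a b : V}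
    (h : Relation.ReflTransGen r a b) (ha : a ∈ A) (hb : b ∉ A) :
    ∃ x y, r x y ∧ x ∈ A ∧ y ∉ A := by
  induction h with
  | refl => exact absurd ha hb
  | @tail c b _ hcb ih =>
    by_cases hc : c ∈ A
    · exact ⟨c, b, hcb, hc, hb⟩
    · exact ih hc

lemma GraphConnected.one_le_cut [Finite E] (h : GraphConnected ends) {A : Set V}
    (hA : A.Nonempty) (hAc : Aᶜ.Nonempty) : 1 ≤ cut ends A := by
  obtain ⟨a, ha⟩ := hA
  obtain ⟨b, hb⟩ := hAc
  obtain ⟨x, y, ⟨-, -, e, he⟩, hx, hy⟩ :=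
    exists_rel_mem_notMem_of_reflTransGen (h.2 a trivial b trivial) ha hb
  have : Nonempty (cutEdges ends A) := ⟨⟨e, x, y, he, hx, hy⟩⟩
  exact (cut_eq_natCard_cutEdges A).symm ▸ Nat.card_pos

lemma RankZero.card_linksIn_univ_add_one [Fintype V] (h : RankZero ends) :
    Nat.card (linksIn ends Set.univ) + 1 = Fintype.card V := by
  have : linksIn ends Set.univ = {e | ¬ (ends e).IsDiag} := by ext; simp [linksIn]
  rw [this]
  exact h.2

lemma Elementary.cut_eq_one_and_card_linksIn_add_one [Fintype V] [Fintype E] {A : Set V}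
    (hconn : GraphConnected ends) (hrank : RankZero ends) (hA : Elementary ends A) :
    cut ends A = 1 ∧ Nat.card (linksIn ends A) + 1 = Nat.card A := by
  have hcut := hconn.one_le_cut hA.1 hA.2.1
  have hlinks := card_linksIn_univ A (ends := ends)
  have hsize := hA.2.2.1.card_le_card_linksIn_add_one
  have hcsize := hA.2.2.2.card_le_card_linksIn_add_one
  have htotal := Set.ncard_add_ncard_compl A
  have := hrank.card_linksIn_univ_add_one
  rw [← Nat.card_coe_set_eq, ← Nat.card_coe_set_eq, Nat.card_eq_fintype_card (α := V)]
    at htotal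
  omega

end Elementary

section StableGraph

open Classical

variable {g n : ℕ} {Γ : MarkedGraph g n}

lemma sum_natCard_fiber_eq {α β : Type} [Fintype α] [Fintype β] (f : α → β) (A : Set β) :
    ∑ v ∈ Finset.univ.filter (· ∈ A), Nat.card {j // f j = v} =
      Nat.card {j // f j ∈ A} := by
  simp only [Nat.card_eq_fintype_card, Fintype.card_subtype]
  simpa using
    Finset.sum_card_fiberwise_eq_card_filter Finset.univ (Finset.univ.filter (· ∈ A)) f

lemma IsStable.three_mul_card_le (hΓ : IsStable Γ) {A : Set (Fin Γ.nv)}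
    (hA : ∀ v ∈ A, Γ.genus v = 0) :
    3 * Nat.card A ≤
      2 * Nat.card (edgesIn Γ.ends A) + cut Γ.ends A + Nat.card {j // Γ.mark j ∈ A} :=
  calc 3 * Nat.card A = ∑ v ∈ Finset.univ.filter (· ∈ A), 3 := by
        simp [Nat.card_eq_fintype_card, Fintype.card_subtype, mul_comm]
    _ ≤ ∑ v ∈ Finset.univ.filter (· ∈ A),
          (val Γ.ends v + Nat.card {j // Γ.mark j = v}) :=
        Finset.sum_le_sum fun v hv => hΓ.2.2 v (hA v (Finset.mem_filter.1 hv).2)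
    _ = _ := by rw [Finset.sum_add_distrib, sum_val, sum_natCard_fiber_eq]

-- For elementary `A` in a good graph, `Γ[A]` is a tree with loops attached, so this is the genus
-- of the vertex that `Γ[A]` contracts to.
variable (Γ) in
noncomputable def genusOn (A : Set (Fin Γ.nv)) : ℕ :=
  ∑ v ∈ Finset.univ.filter (· ∈ A), Γ.genus v + Nat.card (loopsIn Γ.ends A)

lemma Good.genusOn_add_genusOn_compl (hΓ : Good Γ) (A : Set (Fin Γ.nv)) :
    genusOn Γ A + genusOn Γ Aᶜ = g := by
  obtain ⟨⟨-, hgenus, -⟩, hrank⟩ := hΓ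
  have hedges :
      Nat.card (linksIn Γ.ends Set.univ) + Nat.card (loopsIn Γ.ends Set.univ) = Γ.ne := by
    rw [← card_edgesIn]
    simp [edgesIn]
  have hlinks := hrank.card_linksIn_univ_add_one
  have hloops := card_loopsIn_univ A (ends := Γ.ends)
  have hsplit := Finset.sum_filter_add_sum_filter_not Finset.univ (· ∈ A) Γ.genus
  rw [Fintype.card_fin] at hlinks
  simp only [genusOn, Set.mem_compl_iff]
  omega

lemma Good.genusOn_add_card (hΓ : Good Γ) {A : Set (Fin Γ.nv)} (hA : Elementary Γ.ends A) :
    genusOn Γ A + Nat.card A =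
      ∑ v ∈ Finset.univ.filter (· ∈ A), Γ.genus v + Nat.card (edgesIn Γ.ends A) + 1 := by
  have := (hA.cut_eq_one_and_card_linksIn_add_one hΓ.1.1 hΓ.2).2
  have := card_edgesIn A (ends := Γ.ends)
  rw [genusOn]
  omega

lemma Good.two_le_card_mark_of_genusOn_eq_zero (hΓ : Good Γ) {A : Set (Fin Γ.nv)}
    (hA : Elementary Γ.ends A) (h0 : genusOn Γ A = 0) :
    2 ≤ Nat.card {j // Γ.mark j ∈ A} := by
  obtain ⟨hsum, hloops⟩ := Nat.add_eq_zero_iff.1 h0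
  have hgenus (v) (hv : v ∈ A) : Γ.genus v = 0 :=
    Finset.sum_eq_zero_iff.1 hsum v (Finset.mem_filter.2 ⟨Finset.mem_univ v, hv⟩)
  have := hΓ.1.three_mul_card_le hgenus
  have := hA.cut_eq_one_and_card_linksIn_add_one hΓ.1.1 hΓ.2
  have := card_edgesIn A (ends := Γ.ends)
  have : Nonempty A := hA.1.to_subtype
  have := Nat.card_pos (α := A)
  omega

end StableGraph

section Contraction

open Classical

noncomputable def sideMap {V : Type} (A : Set V) (v : V) : Fin 2 := if v ∈ A then 0 else 1

section SideMap

variable {V E : Type} {ends : E → Sym2 V} {A : Set V}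

lemma sideMap_eq_zero_iff {v : V} : sideMap A v = 0 ↔ v ∈ A := by
  by_cases v ∈ A <;> simp [sideMap, *]

lemma sideMap_eq_one_iff {v : V} : sideMap A v = 1 ↔ v ∈ Aᶜ := by
  by_cases v ∈ A <;> simp [sideMap, *]

lemma exists_sideMap_eq_of_notMem_cutEdges {e : E} (he : e ∉ cutEdges ends A) :
    ∃ w, ∀ v ∈ ends e, sideMap A v = w := by
  obtain ⟨a, b, hab⟩ := exists_ends_eq_mk e
  have hsame : a ∈ A ↔ b ∈ A := by
    have := (mem_cutEdges_iff_of_ends_eq hab).not.1 he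
    tauto
  refine ⟨sideMap A a, fun v hv => ?_⟩
  rcases Sym2.mem_iff.1 (hab ▸ hv) with rfl | rfl
  · rfl
  · exact if_congr hsame.symm rfl rfl

end SideMap

variable {g n : ℕ} [NeZero n] {Γ : MarkedGraph g n} {A : Set (Fin Γ.nv)}

omit [NeZero n] in
lemma card_filter_mark_eq (A : Set (Fin Γ.nv)) :
    (Finset.univ.filter (Γ.mark · ∈ A)).card = Nat.card {j // Γ.mark j ∈ A} := by
  rw [Nat.card_eq_fintype_card, Fintype.card_subtype]

omit [NeZero n] in
lemma card_mark_add_card_mark_compl (A : Set (Fin Γ.nv)) :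
    Nat.card {j // Γ.mark j ∈ A} + Nat.card {j // Γ.mark j ∈ Aᶜ} = n := by
  rw [← card_filter_mark_eq, ← card_filter_mark_eq]
  simpa using Finset.card_filter_add_card_filter_not (s := Finset.univ) (Γ.mark · ∈ A)

noncomputable def admissiblePairOfElementary (hΓ : Good Γ) (hA : Elementary Γ.ends A)
    (hm : Γ.mark 0 ∈ A) : AdmissiblePair g n where
  i := genusOn Γ A
  S := Finset.univ.filter (Γ.mark · ∈ A)
  hi := (hΓ.genusOn_add_genusOn_compl A).le.trans' (Nat.le_add_right _ _)
  h1 := Finset.mem_filter.2 ⟨Finset.mem_univ _, hm⟩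
  h0 h := card_filter_mark_eq A ▸ hΓ.two_le_card_mark_of_genusOn_eq_zero hA h
  hg h := by
    have := hΓ.genusOn_add_genusOn_compl A
    have hc := hΓ.two_le_card_mark_of_genusOn_eq_zero hA.compl (by omega)
    have := card_mark_add_card_mark_compl A (Γ := Γ)
    rw [card_filter_mark_eq]
    omega

omit [NeZero n] in
lemma Good.exists_fiber_sideMap (hΓ : Good Γ) (hA : Elementary Γ.ends A) (w : Fin 2) :
    ∃ B : Set (Fin Γ.nv), (∀ v, sideMap A v = w ↔ v ∈ B) ∧ Elementary Γ.ends B ∧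
      cutEdges Γ.ends B = cutEdges Γ.ends A ∧
      ![genusOn Γ A, g - genusOn Γ A] w = genusOn Γ B := by
  fin_cases w
  · exact ⟨A, fun _ => sideMap_eq_zero_iff, hA, rfl, rfl⟩
  · refine ⟨Aᶜ, fun _ => sideMap_eq_one_iff, hA.compl, cutEdges_compl A, ?_⟩
    have := hΓ.genusOn_add_genusOn_compl A
    simp only [Fin.mk_one, Matrix.cons_val_one, Matrix.cons_val_fin_one]
    omega

lemma isContraction_gammaIS (hΓ : Good Γ) (hA : Elementary Γ.ends A) (hm : Γ.mark 0 ∈ A) :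
    IsContraction Γ (GammaIS (admissiblePairOfElementary hΓ hA hm)) (sideMap A) := by
  refine ⟨fun j => ?_, {e | e ∉ cutEdges Γ.ends A}, Finite.equivFinOfCardEq ?_,
    ?_, ?_, ?_, ?_⟩
  · by_cases Γ.mark j ∈ A <;> simp [GammaIS, admissiblePairOfElementary, sideMap, *]
  · exact (Nat.card_congr (Equiv.subtypeEquivRight fun _ => not_not)).trans
      (hA.cut_eq_one_and_card_linksIn_add_one hΓ.1.1 hΓ.2).1
  · rintro ⟨e, he⟩
    obtain ⟨a, b, hab, ha, hb⟩ := not_not.1 he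
    show s(0, 1) = Sym2.map (sideMap A) (Γ.ends e)
    simp [hab, sideMap, ha, hb]
  · exact fun e he => exists_sideMap_eq_of_notMem_cutEdges he
  · intro w
    obtain ⟨B, hB, hBA, hcut, -⟩ := hΓ.exists_fiber_sideMap hA w
    show ConnectedOn _ {v | sideMap A v = w}
    rw [Set.ext hB]
    exact hBA.2.2.1.restrict fun e he => hcut ▸ notMem_cutEdges_of_mem_edgesIn he
  · intro (w : Fin 2)
    obtain ⟨B, hB, hBA, hcut, hgenus⟩ := hΓ.exists_fiber_sideMap hA w
    show ![genusOn Γ A, g - genusOn Γ A] w + Nat.card {v // sideMap A v = w} =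
      ∑ v ∈ Finset.univ.filter (sideMap A · = w), Γ.genus v +
        Nat.card {e // e ∉ cutEdges Γ.ends A ∧ ∀ v ∈ Γ.ends e, sideMap A v = w} + 1
    have hedges :
        Nat.card {e // e ∉ cutEdges Γ.ends A ∧ ∀ v ∈ Γ.ends e, sideMap A v = w} =
          Nat.card (edgesIn Γ.ends B) :=
      Nat.card_congr <| Equiv.subtypeEquivRight fun e =>
        ⟨fun h v hv => (hB v).1 (h.2 v hv),
          fun h => ⟨hcut ▸ notMem_cutEdges_of_mem_edgesIn h, fun v hv => (hB v).2 (h v hv)⟩⟩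
    rw [hgenus, Nat.card_congr (Equiv.subtypeEquivRight hB),
      Finset.filter_congr fun v _ => hB v, hedges]
    exact hΓ.genusOn_add_card hBA

end Contraction

section Hyperplane

open Classical

lemma finsum_mem_eq_sum_filter_univ {V : Type} [Fintype V] (φ : V → ℝ) (A : Set V) :
    ∑ᶠ v ∈ A, φ v = ∑ v ∈ Finset.univ.filter (· ∈ A), φ v := by
  rw [← finsum_mem_coe_finset]
  simp

lemma ell_compl {V E : Type} [Fintype V] {ends : E → Sym2 V} (A : Set V) (k d : ℤ)
    {φ : V → ℝ} (hφ : ∑ v, φ v = k) :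
    ell ends Aᶜ (k - d - cut ends A) φ = -ell ends A d φ := by
  have hsplit := Finset.sum_filter_add_sum_filter_not Finset.univ (· ∈ A) φ
  rw [ell, ell, cut_compl, finsum_mem_eq_sum_filter_univ, finsum_mem_eq_sum_filter_univ]
  simp only [Set.mem_compl_iff]
  push_cast
  linarith

variable {g n : ℕ} [NeZero n]

lemma finsum_eq_of_mem_vgnSet (hgood : ∀ p : AdmissiblePair g n, Good (GammaIS p))
    {φ : ∀ Γ : GoodGraph g n, Fin Γ.1.nv → ℝ} (hφ : φ ∈ VgnSet g n)
    (Γ : GoodGraph g n) {A : Set (Fin Γ.1.nv)} (hA : Elementary Γ.1.ends A)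
    (hm : Γ.1.mark 0 ∈ A) :
    ∑ᶠ v ∈ A, φ Γ v =
      φ ⟨GammaIS (admissiblePairOfElementary Γ.2 hA hm), hgood _⟩ (0 : Fin 2) := by
  rw [hφ.2 Γ ⟨_, hgood _⟩ _ (isContraction_gammaIS Γ.2 hA hm) (0 : Fin 2),
    finsum_mem_eq_sum_filter_univ]
  exact Finset.sum_congr (Finset.ext fun v => by
    simp only [Finset.mem_filter, Finset.mem_univ, true_and]
    exact sideMap_eq_zero_iff.symm) fun _ _ => rfl

end Hyperplane

theorem statement11_general (g n : ℕ) [NeZero n]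
    (hgood : ∀ p : AdmissiblePair g n, Good (GammaIS p))
    (Γ : GoodGraph g n) (S : Set (Fin Γ.1.nv)) (hS : Elementary Γ.1.ends S) (d : ℤ) :
    ∃ (p : AdmissiblePair g n) (d' : ℤ),
      {φ ∈ VgnSet g n | ell Γ.1.ends S d (φ Γ) = 0} =
        {φ ∈ VgnSet g n |
          (d' : ℝ) - φ ⟨GammaIS p, hgood p⟩ ((0 : Fin 2)) + 1 / 2 = 0} := by
  wlog hm : Γ.1.mark 0 ∈ S generalizing S d
  · obtain ⟨p, d', h⟩ := this Sᶜ hS.compl ((g : ℤ) - 1 - d - cut Γ.1.ends S) hm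
    refine ⟨p, d', Eq.trans (Set.ext fun φ => and_congr_right fun hφ => ?_) h⟩
    rw [ell_compl S _ d (by push_cast; exact hφ.1 Γ), neg_eq_zero]
  refine ⟨admissiblePairOfElementary Γ.2 hS hm, d,
    Set.ext fun φ => and_congr_right fun hφ => ?_⟩
  rw [ell, finsum_eq_of_mem_vgnSet hgood hφ Γ hS hm,
    (hS.cut_eq_one_and_card_linksIn_add_one Γ.2.1.1 Γ.2.2).1]
  norm_num

/-- Every stability hyperplane of `V_{g,n}` — i.e. a set of the form
`{φ ∈ V_{g,n} : ℓ(S,d)(φ(Γ)) = 0}` for a stable marked graph `Γ` of loop-free circuit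
rank 0, an elementary `S` and `d ∈ ℤ` — is of the form
`H(i,S,d) = {φ ∈ V_{g,n} : d − φ(Γ(i,S))(v1) + 1/2 = 0}` for some admissible pair
`(i,S)` and integer `d`. -/
theorem statement11 (g n : ℕ) [NeZero n] (hg0 : g = 0 → 3 ≤ n)
    (hgood : ∀ p : AdmissiblePair g n, Good (GammaIS p))
    (Γ : GoodGraph g n) (S : Set (Fin Γ.1.nv)) (hS : Elementary Γ.1.ends S) (d : ℤ) :
    ∃ (p : AdmissiblePair g n) (d' : ℤ),
      {φ ∈ VgnSet g n | ell Γ.1.ends S d (φ Γ) = 0} =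
        {φ ∈ VgnSet g n |
          (d' : ℝ) - φ ⟨GammaIS p, hgood p⟩ ((0 : Fin 2)) + 1 / 2 = 0} :=
  statement11_general g n hgood Γ S hS d

end ThetaPaper
end
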